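/- Let N : ℕ → ℕ be a sequence with N(m) ≥ m + 1 for all m ≥ 1 and N(m)/m² → 0 as m → ∞. Then N(m)^{(m)}/N(m)^m = (N(m)!/(N(m)−m)!)/N(m)^m → 0 as m → ∞; consequently, for the resampling matrix S = S(N(m), m) on ℝ^{Π(m)}, ‖Id − S‖₁ = 2·(1 − N(m)^{(m)}/N(m)^m) → 2, so the iterated bootstrap does not converge at a linear rate independent of m unless N grows at least quadratically with m. -/

import Mathlib

open Finset Filter
open scoped Classical Topology

/-- The resampling matrix `S ∈ ℝ^{Π(m)×Π(m)}`:
`S_{π,σ} = N^{(#π)} / N^{#σ}` if `σ ≤ π`, and `0` otherwise. -/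
noncomputable def resampS (N m : ℕ) :
    Matrix (Finpartition (Finset.univ : Finset (Fin m)))
      (Finpartition (Finset.univ : Finset (Fin m))) ℝ :=
  fun π σ =>
    if σ ≤ π then (N.descFactorial π.parts.card : ℝ) / (N : ℝ) ^ σ.parts.card else 0

/-- The operator norm induced by the `ℓ¹` norm: `‖A‖₁ = sup_{f ≠ 0} ‖Af‖₁ / ‖f‖₁`. -/
noncomputable def opNormL1 {ι : Type*} [Fintype ι] (A : Matrix ι ι ℝ) : ℝ :=
  ⨆ f : {f : ι → ℝ // f ≠ 0},
    (∑ π, |A.mulVec (f : ι → ℝ) π|) / (∑ π, |(f : ι → ℝ) π|)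

/-!
The column sums of `S` are all `1`: the `N ^ #σ` maps from the blocks of `σ` to an `N`-set are
sorted by the partition `π ≥ σ` cut out by their fibres, and the maps inducing `π` are the
injections of the blocks of `π`, of which there are `N^{(#π)}`. As `S ≥ 0`, column `σ` of `1 - S`
then has `ℓ¹` norm `2 (1 - S_{σσ}) = 2 (1 - N^{(#σ)} / N^{#σ})`, which is largest for the partition
into singletons, and the `ℓ¹` operator norm is the largest column norm. Finally
`N^{(m)} / N^m = ∏_{i<m} (1 - i/N) ≤ exp (-m(m-1)/(2N))`, which tends to `0` when `m² / N → ∞`.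
-/

namespace Finpartition

variable {α β : Type*} [Fintype α] [DecidableEq α]

section partOf

variable (P : Finpartition (univ : Finset α))

def partOf (x : α) : P.parts := ⟨P.part x, P.part_mem.2 (mem_univ x)⟩

variable {P}

lemma partOf_surjective : Function.Surjective P.partOf := by
  rintro ⟨t, ht⟩
  obtain ⟨x, hx⟩ := P.nonempty_of_mem_parts ht
  exact ⟨x, Subtype.ext (P.part_eq_of_mem ht hx)⟩

lemma partOf_eq_partOf_iff {x y : α} : P.partOf x = P.partOf y ↔ x ∈ P.part y := by
  rw [P.mem_part_iff_part_eq_part (mem_univ x) (mem_univ y), partOf, partOf, Subtype.mk.injEq]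

lemma partOf_eq_partOf_of_mem {t : Finset α} (ht : t ∈ P.parts) {x y : α} (hx : x ∈ t)
    (hy : y ∈ t) : P.partOf x = P.partOf y := by
  rw [partOf_eq_partOf_iff, P.part_eq_of_mem ht hy]
  exact hx

lemma ext_partOf {Q : Finpartition (univ : Finset α)}
    (h : ∀ x y, P.partOf x = P.partOf y ↔ Q.partOf x = Q.partOf y) : P = Q := by
  have hpart : ∀ x, P.part x = Q.part x := fun x => by
    ext y
    rw [← partOf_eq_partOf_iff, ← partOf_eq_partOf_iff, h]
  ext t
  constructor
  · intro ht
    obtain ⟨x, hx⟩ := P.nonempty_of_mem_parts ht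
    rw [← P.part_eq_of_mem ht hx, hpart]
    exact Q.part_mem.2 (mem_univ x)
  · intro ht
    obtain ⟨x, hx⟩ := Q.nonempty_of_mem_parts ht
    rw [← Q.part_eq_of_mem ht hx, ← hpart]
    exact P.part_mem.2 (mem_univ x)

lemma le_iff_partOf {Q : Finpartition (univ : Finset α)} :
    P ≤ Q ↔ ∀ x y, P.partOf x = P.partOf y → Q.partOf x = Q.partOf y := by
  constructor
  · intro hPQ x y hxy
    obtain ⟨t, ht, hPt⟩ := hPQ (P.part_mem.2 (mem_univ y))
    exact partOf_eq_partOf_of_mem ht (hPt (partOf_eq_partOf_iff.1 hxy))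
      (hPt (P.mem_part (mem_univ y)))
  · intro h t ht
    obtain ⟨x, hx⟩ := P.nonempty_of_mem_parts ht
    refine ⟨Q.part x, Q.part_mem.2 (mem_univ x), fun y hy => ?_⟩
    exact partOf_eq_partOf_iff.1 (h y x (partOf_eq_partOf_of_mem ht hy hx))

end partOf

noncomputable def ker (F : α → β) : Finpartition (univ : Finset α) :=
  ofSetoid (Setoid.ker F)

lemma partOf_ker_eq_iff {F : α → β} {x y : α} :
    (ker F).partOf x = (ker F).partOf y ↔ F x = F y := by
  rw [partOf_eq_partOf_iff, ker, mem_part_ofSetoid_iff_rel, Setoid.ker_def, eq_comm]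

lemma ker_comp_partOf {P : Finpartition (univ : Finset α)} {e : P.parts → β}
    (he : Function.Injective e) : ker (e ∘ P.partOf) = P :=
  ext_partOf fun _ _ => partOf_ker_eq_iff.trans he.eq_iff

lemma le_ker_comp_partOf (P : Finpartition (univ : Finset α)) (g : P.parts → β) :
    P ≤ ker (g ∘ P.partOf) :=
  le_iff_partOf.2 fun _ _ h => partOf_ker_eq_iff.2 (congrArg g h)

lemma exists_embedding_comp_partOf {P : Finpartition (univ : Finset α)} {F : α → β}
    (hF : ker F = P) : ∃ e : P.parts ↪ β, ⇑e ∘ P.partOf = F := by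
  have hFP : ∀ x y, F x = F y ↔ P.partOf x = P.partOf y := fun x y => by
    rw [← partOf_ker_eq_iff, hF]
  set r := Function.surjInv (partOf_surjective (P := P))
  have hr : ∀ x, F (r (P.partOf x)) = F x := fun x =>
    (hFP _ _).2 (Function.surjInv_eq _ _)
  refine ⟨⟨F ∘ r, ?_⟩, funext hr⟩
  intro s t hst
  obtain ⟨x, rfl⟩ := partOf_surjective s
  obtain ⟨y, rfl⟩ := partOf_surjective t
  simp only [Function.comp_apply, hr] at hst
  exact (hFP x y).1 hst

section coarser

variable {P : Finpartition (univ : Finset α)}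

/-- Defined through a representative of `s`; independent of that choice as soon as `P ≤ Q`. -/
noncomputable def toCoarser (Q : Finpartition (univ : Finset α)) (s : P.parts) : Q.parts :=
  Q.partOf (Function.surjInv partOf_surjective s)

variable {Q : Finpartition (univ : Finset α)}

lemma toCoarser_partOf (h : P ≤ Q) (x : α) : toCoarser Q (P.partOf x) = Q.partOf x :=
  le_iff_partOf.1 h _ _ (Function.surjInv_eq _ _)

lemma toCoarser_comp_partOf (h : P ≤ Q) : toCoarser Q ∘ P.partOf = Q.partOf :=
  funext (toCoarser_partOf h)

lemma toCoarser_surjective (h : P ≤ Q) :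
    Function.Surjective (toCoarser Q : P.parts → Q.parts) :=
  Function.Surjective.of_comp (g := P.partOf) ((toCoarser_comp_partOf h).symm ▸ partOf_surjective)

end coarser

variable [Fintype β]

lemma card_coarsening_fiber (P Q : Finpartition (univ : Finset α)) :
    Fintype.card {g : P.parts → β // ker (g ∘ P.partOf) = Q} =
      if P ≤ Q then (Fintype.card β).descFactorial #Q.parts else 0 := by
  split_ifs with hPQ
  · rw [← Fintype.card_coe Q.parts, ← Fintype.card_embedding_eq]
    symm
    refine Fintype.card_congr (Equiv.ofBijective
      (fun e => ⟨e ∘ toCoarser Q, by rw [Function.comp_assoc, toCoarser_comp_partOf hPQ,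
        ker_comp_partOf e.injective]⟩) ⟨fun e f hef => ?_, fun ⟨g, hg⟩ => ?_⟩)
    · exact DFunLike.coe_injective ((toCoarser_surjective hPQ).injective_comp_right
        (congrArg Subtype.val hef))
    · obtain ⟨e, he⟩ := exists_embedding_comp_partOf hg
      refine ⟨e, Subtype.ext (partOf_surjective.injective_comp_right ?_)⟩
      change ⇑e ∘ toCoarser Q ∘ P.partOf = g ∘ P.partOf
      rw [toCoarser_comp_partOf hPQ, he]
  · rw [Fintype.card_eq_zero_iff]
    exact ⟨fun ⟨g, hg⟩ => hPQ (hg ▸ le_ker_comp_partOf P g)⟩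

lemma card_pow_card_parts_eq_sum (P : Finpartition (univ : Finset α)) :
    Fintype.card β ^ #P.parts =
      ∑ Q : Finpartition (univ : Finset α),
        if P ≤ Q then (Fintype.card β).descFactorial #Q.parts else 0 := by
  rw [← Fintype.card_coe P.parts, ← Fintype.card_fun,
    ← Fintype.card_congr (Equiv.sigmaFiberEquiv fun g : P.parts → β => ker (g ∘ P.partOf)),
    Fintype.card_sigma]
  exact Finset.sum_congr rfl fun Q _ => card_coarsening_fiber P Q

end Finpartition

section Matrix

open Matrix

variable {ι : Type*} [Fintype ι]

lemma sum_abs_mulVec_le {A : Matrix ι ι ℝ} {C : ℝ} (hA : ∀ j, ∑ i, |A i j| ≤ C) (f : ι → ℝ) :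
    ∑ i, |(A *ᵥ f) i| ≤ C * ∑ j, |f j| :=
  calc ∑ i, |(A *ᵥ f) i| ≤ ∑ i, ∑ j, |A i j| * |f j| :=
        sum_le_sum fun i _ => (abs_sum_le_sum_abs _ _).trans_eq (by simp only [abs_mul])
    _ = ∑ j, (∑ i, |A i j|) * |f j| := by rw [sum_comm]; simp only [sum_mul]
    _ ≤ ∑ j, C * |f j| := sum_le_sum fun j _ => mul_le_mul_of_nonneg_right (hA j) (abs_nonneg _)
    _ = C * ∑ j, |f j| := (mul_sum _ _ _).symm

lemma opNormL1_eq_of_isGreatest [DecidableEq ι] {A : Matrix ι ι ℝ} {C : ℝ}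
    (hC : IsGreatest (Set.range fun j => ∑ i, |A i j|) C) : opNormL1 A = C := by
  obtain ⟨⟨j₀, hj₀⟩, hle⟩ := hC
  have hcol : ∀ j, ∑ i, |A i j| ≤ C := fun j => hle ⟨j, rfl⟩
  have hratio : ∀ f : {f : ι → ℝ // f ≠ 0},
      (∑ i, |(A *ᵥ (f : ι → ℝ)) i|) / (∑ i, |(f : ι → ℝ) i|) ≤ C := by
    rintro ⟨f, hf⟩
    obtain ⟨i, hi⟩ := Function.ne_iff.mp hf
    rw [div_le_iff₀ (sum_pos' (fun j _ => abs_nonneg _) ⟨i, mem_univ i, abs_pos.mpr hi⟩)]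
    exact sum_abs_mulVec_le hcol f
  let e₀ : {f : ι → ℝ // f ≠ 0} := ⟨Pi.single j₀ 1, by simp⟩
  have he₀ : (∑ i, |(A *ᵥ (e₀ : ι → ℝ)) i|) / (∑ i, |(e₀ : ι → ℝ) i|) = C := by
    simp [e₀, Pi.single_apply, apply_ite abs, hj₀]
  have : Nonempty {f : ι → ℝ // f ≠ 0} := ⟨e₀⟩
  exact le_antisymm (ciSup_le hratio)
    (he₀ ▸ le_ciSup ⟨C, Set.forall_mem_range.2 hratio⟩ e₀)

lemma sum_abs_one_sub_apply [DecidableEq ι] {A : Matrix ι ι ℝ} {j : ι}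
    (h0 : ∀ i, 0 ≤ A i j) (h1 : ∑ i, A i j = 1) :
    ∑ i, |(1 - A) i j| = 2 * (1 - A j j) := by
  have hjj : A j j ≤ 1 := h1 ▸ single_le_sum (fun i _ => h0 i) (mem_univ j)
  have habs : ∀ i, |(1 - A) i j| = A i j + if i = j then 1 - 2 * A j j else 0 := by
    intro i
    rw [Matrix.sub_apply, Matrix.one_apply]
    split_ifs with hij
    · subst hij; rw [abs_of_nonneg (by linarith)]; ring
    · rw [zero_sub, abs_neg, abs_of_nonneg (h0 i), add_zero]
  rw [sum_congr rfl fun i _ => habs i, sum_add_distrib, h1, sum_ite_eq', if_pos (mem_univ j)]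
  ring

end Matrix

lemma Nat.descFactorial_div_pow_eq_prod (N m : ℕ) :
    (N.descFactorial m : ℝ) / (N : ℝ) ^ m = ∏ i ∈ range m, ((N - i : ℕ) : ℝ) / N := by
  rw [Nat.descFactorial_eq_prod_range, Nat.cast_prod, prod_div_distrib, prod_const, card_range]

lemma Nat.descFactorial_div_pow_antitone (N : ℕ) :
    Antitone fun k => (N.descFactorial k : ℝ) / (N : ℝ) ^ k := by
  refine antitone_nat_of_succ_le fun k => ?_
  simp only [Nat.descFactorial_div_pow_eq_prod, prod_range_succ]
  exact mul_le_of_le_one_right (prod_nonneg fun _ _ => by positivity)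
    (div_le_one_of_le₀ (by exact_mod_cast N.sub_le k) (Nat.cast_nonneg N))

lemma Nat.cast_sub_div_le_exp (N i : ℕ) : ((N - i : ℕ) : ℝ) / N ≤ Real.exp (-(i / N)) := by
  rcases Nat.eq_zero_or_pos N with rfl | hN
  · simp
  rcases le_or_gt i N with hi | hi
  · rw [Nat.cast_sub hi, sub_div, div_self (by positivity)]
    linarith [Real.add_one_le_exp (-(i / N : ℝ))]
  · rw [Nat.sub_eq_zero_of_le hi.le, Nat.cast_zero, zero_div]
    exact Real.exp_nonneg _

lemma sum_range_cast_id (m : ℕ) : ∑ i ∈ range m, (i : ℝ) = m * (m - 1) / 2 := by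
  induction m with
  | zero => simp
  | succ n ih => rw [sum_range_succ, ih]; push_cast; ring

lemma Nat.descFactorial_div_pow_le_exp (N m : ℕ) :
    (N.descFactorial m : ℝ) / (N : ℝ) ^ m ≤ Real.exp (-(m * (m - 1) / 2 / N)) :=
  calc (N.descFactorial m : ℝ) / (N : ℝ) ^ m = ∏ i ∈ range m, ((N - i : ℕ) : ℝ) / N :=
        Nat.descFactorial_div_pow_eq_prod N m
    _ ≤ ∏ i ∈ range m, Real.exp (-(i / N)) :=
        prod_le_prod (fun _ _ => by positivity) fun i _ => Nat.cast_sub_div_le_exp N i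
    _ = Real.exp (-(m * (m - 1) / 2 / N)) := by
        rw [← Real.exp_sum, sum_neg_distrib, ← sum_div, sum_range_cast_id]

section resampS

variable {N : ℕ} {m : ℕ}

lemma resampS_nonneg (π σ : Finpartition (univ : Finset (Fin m))) : 0 ≤ resampS N m π σ := by
  unfold resampS
  split_ifs <;> positivity

lemma resampS_apply_self (σ : Finpartition (univ : Finset (Fin m))) :
    resampS N m σ σ = (N.descFactorial #σ.parts : ℝ) / (N : ℝ) ^ #σ.parts :=
  if_pos le_rfl

lemma sum_resampS_apply (hN : 0 < N) (σ : Finpartition (univ : Finset (Fin m))) :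
    ∑ π, resampS N m π σ = 1 := by
  have hcount := Finpartition.card_pow_card_parts_eq_sum (β := Fin N) σ
  rw [Fintype.card_fin] at hcount
  have hcol : ∑ π, resampS N m π σ =
      ((∑ π : Finpartition (univ : Finset (Fin m)),
        if σ ≤ π then N.descFactorial #π.parts else 0 : ℕ) : ℝ) / (N : ℝ) ^ #σ.parts := by
    rw [Nat.cast_sum, sum_div]
    refine sum_congr rfl fun π _ => ?_
    unfold resampS
    split_ifs <;> simp
  rw [hcol, ← hcount, Nat.cast_pow, div_self (pow_ne_zero _ (Nat.cast_ne_zero.2 hN.ne'))]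

lemma opNormL1_one_sub_resampS (hN : 0 < N) :
    opNormL1 (1 - resampS N m) = 2 * (1 - (N.descFactorial m : ℝ) / (N : ℝ) ^ m) := by
  have hcol : ∀ σ, ∑ π, |(1 - resampS N m) π σ| =
      2 * (1 - (N.descFactorial #σ.parts : ℝ) / (N : ℝ) ^ #σ.parts) := fun σ => by
    rw [sum_abs_one_sub_apply (fun π => resampS_nonneg π σ) (sum_resampS_apply hN σ),
      resampS_apply_self]
  refine opNormL1_eq_of_isGreatest ⟨⟨⊥, ?_⟩, ?_⟩
  · dsimp only
    rw [hcol, Finpartition.card_bot, card_univ, Fintype.card_fin]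
  · rintro _ ⟨σ, rfl⟩
    have hσ : #σ.parts ≤ m := by
      simpa only [card_univ, Fintype.card_fin] using σ.card_parts_le_card
    dsimp only
    rw [hcol]
    linarith [Nat.descFactorial_div_pow_antitone N hσ]

end resampS

lemma tendsto_descFactorial_div_pow_zero {N : ℕ → ℕ} (hpos : ∀ᶠ m in atTop, 0 < N m)
    (hquad : Tendsto (fun m : ℕ => (N m : ℝ) / (m : ℝ) ^ 2) atTop (𝓝 0)) :
    Tendsto (fun m : ℕ => ((N m).descFactorial m : ℝ) / (N m : ℝ) ^ m) atTop (𝓝 0) := by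
  have hinv : Tendsto (fun m : ℕ => (m : ℝ) ^ 2 / N m) atTop atTop := by
    have hquad' : Tendsto (fun m : ℕ => (N m : ℝ) / (m : ℝ) ^ 2) atTop (𝓝[>] 0) := by
      refine tendsto_nhdsWithin_of_tendsto_nhds_of_eventually_within _ hquad ?_
      filter_upwards [hpos, eventually_ge_atTop 1] with m hNm hm
      exact div_pos (Nat.cast_pos.2 hNm) (pow_pos (Nat.cast_pos.2 hm : (0 : ℝ) < m) 2)
    exact hquad'.inv_tendsto_nhdsGT_zero.congr fun m => by rw [Pi.inv_apply, inv_div]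
  have hexponent : Tendsto (fun m : ℕ => (m : ℝ) * (m - 1) / 2 / N m) atTop atTop := by
    refine tendsto_atTop_mono' atTop ?_ (hinv.atTop_div_const (by norm_num : (0 : ℝ) < 4))
    filter_upwards [eventually_ge_atTop 2] with m hm
    have hgauss : (m : ℝ) ^ 2 / 4 ≤ m * (m - 1) / 2 := by
      have hm' : (2 : ℝ) ≤ m := by exact_mod_cast hm
      nlinarith
    rw [div_right_comm]
    exact div_le_div_of_nonneg_right hgauss (Nat.cast_nonneg _)
  refine squeeze_zero (fun m => by positivity)
    (fun m => Nat.descFactorial_div_pow_le_exp (N m) m) ?_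
  exact Real.tendsto_exp_neg_atTop_nhds_zero.comp hexponent

/-- If `N(m) ≥ m + 1` and `N(m)/m² → 0`, then `N(m)^{(m)}/N(m)^m → 0`, and consequently
`‖Id − S(N(m), m)‖₁ = 2·(1 − N(m)^{(m)}/N(m)^m) → 2`: no uniform linear convergence. -/
theorem no_uniform_linear_convergence (N : ℕ → ℕ)
    (hN : ∀ m : ℕ, 1 ≤ m → m + 1 ≤ N m)
    (hquad : Tendsto (fun m : ℕ => (N m : ℝ) / (m : ℝ) ^ 2) atTop (𝓝 0)) :
    Tendsto (fun m : ℕ => ((N m).descFactorial m : ℝ) / (N m : ℝ) ^ m) atTop (𝓝 0) ∧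
    (∀ m : ℕ, 1 ≤ m →
      opNormL1 (1 - resampS (N m) m) =
        2 * (1 - ((N m).descFactorial m : ℝ) / (N m : ℝ) ^ m)) ∧
    Tendsto (fun m : ℕ => opNormL1 (1 - resampS (N m) m)) atTop (𝓝 2) := by
  have hpos : ∀ m, 1 ≤ m → 0 < N m := fun m hm => by have := hN m hm; omega
  have hratio := tendsto_descFactorial_div_pow_zero (eventually_atTop.2 ⟨1, hpos⟩) hquad
  have hnorm : ∀ m : ℕ, 1 ≤ m → opNormL1 (1 - resampS (N m) m) =
      2 * (1 - ((N m).descFactorial m : ℝ) / (N m : ℝ) ^ m) :=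
    fun m hm => opNormL1_one_sub_resampS (hpos m hm)
  refine ⟨hratio, hnorm, ?_⟩
  have hlim := (tendsto_const_nhds (x := (1 : ℝ))).sub hratio |>.const_mul 2
  rw [sub_zero, mul_one] at hlim
  exact hlim.congr' (eventually_atTop.2 ⟨1, fun m hm => (hnorm m hm).symm⟩)
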